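/- Let T, N ≥ 1. For t ∈ [T] let A_t ∈ ℝ^{N×N} be diagonal with (A_t)_{n,n} ∈ [A_min, 1] for some A_min ∈ (0,1], let Δ_t ≥ 0, and let b_t ∈ ℝ^N. Assume for every n ∈ [N] and t ∈ [T] that (A_t)_{n,n} + Δ_t ≤ 1, and for every n ∈ [N] that min_{t} (b_t)_n ≤ 0 ≤ max_{t} (b_t)_n. Define h_0 = 0 and h_t = A_t h_{t-1} + Δ_t b_t. Then max_{t,s∈[T]} ‖h_t - h_s‖_∞ ≤ (1 - A_min^{T-1}) · max_{t,s∈[T]} ‖b_t - b_s‖_∞. -/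
import Mathlib


set_option maxHeartbeats 1000000 in
/-- Over-smoothing theorem for SSMs: the sup-norm diameter of the memory
states is contracted by the factor `1 - A_min^(T-1)` relative to the diameter
of the encoded inputs. -/
theorem ssm_oversmoothing
    (T N : ℕ) (hT : 1 ≤ T) (hN : 0 < N)
    (Amin : ℝ) (hA0 : 0 < Amin) (hA1 : Amin ≤ 1)
    (A : ℕ → Matrix (Fin N) (Fin N) ℝ)
    (hdiag : ∀ t, 1 ≤ t → t ≤ T → (A t).IsDiag)
    (hAent : ∀ t, 1 ≤ t → t ≤ T → ∀ n : Fin N, Amin ≤ A t n n ∧ A t n n ≤ 1)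
    (Δ : ℕ → ℝ) (hΔ : ∀ t, 1 ≤ t → t ≤ T → 0 ≤ Δ t)
    (hsum : ∀ t, 1 ≤ t → t ≤ T → ∀ n : Fin N, A t n n + Δ t ≤ 1)
    (b : ℕ → Fin N → ℝ)
    (hb : ∀ n : Fin N,
      (Finset.Icc 1 T).inf' (Finset.nonempty_Icc.mpr hT) (fun t => b t n) ≤ 0 ∧
      0 ≤ (Finset.Icc 1 T).sup' (Finset.nonempty_Icc.mpr hT) (fun t => b t n))
    (h : ℕ → Fin N → ℝ)
    (h0 : h 0 = 0)
    (hrec : ∀ t, 1 ≤ t → t ≤ T → h t = (A t).mulVec (h (t - 1)) + Δ t • b t) :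
    ∀ t ∈ Finset.Icc 1 T, ∀ s ∈ Finset.Icc 1 T,
      ‖h t - h s‖ ≤ (1 - Amin ^ (T - 1)) *
        (((Finset.Icc 1 T) ×ˢ (Finset.Icc 1 T)).sup'
          ((Finset.nonempty_Icc.mpr hT).product (Finset.nonempty_Icc.mpr hT))
          fun ts => ‖b ts.1 - b ts.2‖) := by
  classical
  have hTne : (Finset.Icc 1 T).Nonempty := Finset.nonempty_Icc.mpr hT
  set M : Fin N → ℝ := fun n => (Finset.Icc 1 T).sup' hTne (fun t => b t n) with hMdef
  set m : Fin N → ℝ := fun n => (Finset.Icc 1 T).inf' hTne (fun t => b t n) with hmdef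
  have hm0 : ∀ n, m n ≤ 0 := fun n => (hb n).1
  have hM0 : ∀ n, 0 ≤ M n := fun n => (hb n).2
  have hbM : ∀ (n : Fin N) u, 1 ≤ u → u ≤ T → b u n ≤ M n :=
    fun n u h1 h2 => Finset.le_sup' (f := fun t => b t n) (Finset.mem_Icc.mpr ⟨h1, h2⟩)
  have hbm : ∀ (n : Fin N) u, 1 ≤ u → u ≤ T → m n ≤ b u n :=
    fun n u h1 h2 => Finset.inf'_le (f := fun t => b t n) (Finset.mem_Icc.mpr ⟨h1, h2⟩)
  -- scalar recurrence
  have hscal : ∀ u, 1 ≤ u → u ≤ T → ∀ n : Fin N,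
      h u n = A u n n * h (u-1) n + Δ u * b u n := by
    intro u hu1 huT n
    have hr := congrFun (hrec u hu1 huT) n
    have hd : (A u).mulVec (h (u-1)) n = A u n n * h (u-1) n := by
      simp only [Matrix.mulVec, dotProduct]
      rw [Finset.sum_eq_single n]
      · intro j _ hj
        rw [hdiag u hu1 huT (Ne.symm hj), zero_mul]
      · intro hn; exact absurd (Finset.mem_univ n) hn
    rw [hr]
    rw [Pi.add_apply, Pi.smul_apply, smul_eq_mul, hd]
  -- states stay in [m n, M n]
  have hbound : ∀ (n : Fin N) u, u ≤ T → m n ≤ h u n ∧ h u n ≤ M n := by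
    intro n u
    induction u with
    | zero =>
      intro _
      rw [h0]
      exact ⟨hm0 n, hM0 n⟩
    | succ u ih =>
      intro huT
      have ihu := ih (Nat.le_of_succ_le huT)
      have hr := hscal (u+1) (by omega) huT n
      have he : u + 1 - 1 = u := by omega
      rw [he] at hr
      have ha := hAent (u+1) (by omega) huT n
      have hd := hΔ (u+1) (by omega) huT
      have hs' := hsum (u+1) (by omega) huT n
      have hx1 := hbM n (u+1) (by omega) huT
      have hx2 := hbm n (u+1) (by omega) huT
      have ha0 : (0:ℝ) ≤ A (u+1) n n := le_trans hA0.le ha.1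
      constructor
      · nlinarith [mul_nonneg ha0 (sub_nonneg.mpr ihu.1),
          mul_nonneg hd (sub_nonneg.mpr hx2),
          mul_nonneg (by linarith : (0:ℝ) ≤ 1 - A (u+1) n n - Δ (u+1)) (by linarith [hm0 n] : (0:ℝ) ≤ -m n)]
      · nlinarith [mul_nonneg ha0 (sub_nonneg.mpr ihu.2),
          mul_nonneg hd (sub_nonneg.mpr hx1),
          mul_nonneg (by linarith : (0:ℝ) ≤ 1 - A (u+1) n n - Δ (u+1)) (hM0 n)]
  -- difference bound
  have hdiff : ∀ (n : Fin N) (s : ℕ), 1 ≤ s → ∀ k, s + k ≤ T →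
      h (s+k) n - h s n ≤ (1 - Amin ^ k) * (M n - m n) ∧
      (1 - Amin ^ k) * (m n - M n) ≤ h (s+k) n - h s n := by
    intro n s hs1 k
    induction k with
    | zero =>
      intro _
      simp
    | succ k ih =>
      intro hkT
      have ihk := ih (by omega)
      have hr := hscal (s+k+1) (by omega) (by omega)  n
      have he : s + k + 1 - 1 = s + k := by omega
      rw [he] at hr
      have he2 : s + (k+1) = s + k + 1 := by omega
      rw [he2]
      have ha := hAent (s+k+1) (by omega) (by omega) n
      have hd := hΔ (s+k+1) (by omega) (by omega)
      have hs' := hsum (s+k+1) (by omega) (by omega) n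
      have hx1 := hbM n (s+k+1) (by omega) (by omega)
      have hx2 := hbm n (s+k+1) (by omega) (by omega)
      have ha0 : (0:ℝ) ≤ A (s+k+1) n n := le_trans hA0.le ha.1
      have hhs := hbound n s (by omega)
      have hpk : (0:ℝ) ≤ Amin ^ k := pow_nonneg hA0.le k
      rw [pow_succ]
      constructor
      · nlinarith [mul_le_mul_of_nonneg_left ihk.1 ha0,
          mul_nonneg (by linarith : (0:ℝ) ≤ 1 - A (s+k+1) n n) (sub_nonneg.mpr hhs.1),
          mul_nonneg hd (sub_nonneg.mpr hx1),
          mul_nonneg (mul_nonneg (sub_nonneg.mpr ha.1) hpk)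
            (by linarith [hm0 n, hM0 n] : (0:ℝ) ≤ M n - m n),
          mul_nonneg (by linarith : (0:ℝ) ≤ 1 - A (s+k+1) n n - Δ (s+k+1)) (hM0 n)]
      · nlinarith [mul_le_mul_of_nonneg_left ihk.2 ha0,
          mul_nonneg (by linarith : (0:ℝ) ≤ 1 - A (s+k+1) n n) (sub_nonneg.mpr hhs.2),
          mul_nonneg hd (sub_nonneg.mpr hx2),
          mul_nonneg (mul_nonneg (sub_nonneg.mpr ha.1) hpk)
            (by linarith [hm0 n, hM0 n] : (0:ℝ) ≤ M n - m n),
          mul_nonneg (by linarith : (0:ℝ) ≤ 1 - A (s+k+1) n n - Δ (s+k+1))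
            (by linarith [hm0 n] : (0:ℝ) ≤ -m n)]
  -- per-coordinate pair bound
  have hpair : ∀ (n : Fin N) (t s : ℕ), 1 ≤ s → s ≤ t → t ≤ T →
      |h t n - h s n| ≤ (1 - Amin ^ (T-1)) * (M n - m n) := by
    intro n t s hs1 hst htT
    have he : s + (t - s) = t := by omega
    have hd := hdiff n s hs1 (t - s) (by omega)
    rw [he] at hd
    have hp : Amin ^ (T-1) ≤ Amin ^ (t - s) :=
      pow_le_pow_of_le_one hA0.le hA1 (by omega)
    have hMm : (0:ℝ) ≤ M n - m n := by linarith [hm0 n, hM0 n]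
    rw [abs_le]
    constructor
    · nlinarith [hd.2]
    · nlinarith [hd.1]
  have hpair' : ∀ (n : Fin N) (t s : ℕ), 1 ≤ t → t ≤ T → 1 ≤ s → s ≤ T →
      |h t n - h s n| ≤ (1 - Amin ^ (T-1)) * (M n - m n) := by
    intro n t s ht1 htT hs1 hsT
    rcases le_total s t with hst | hts
    · exact hpair n t s hs1 hst htT
    · rw [abs_sub_comm]
      exact hpair n s t ht1 hts hsT
  -- relate M n - m n to the sup over pairs
  intro t ht s hs
  rw [Finset.mem_Icc] at ht hs
  set S : ℝ := ((Finset.Icc 1 T) ×ˢ (Finset.Icc 1 T)).sup'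
      (hTne.product hTne) (fun ts => ‖b ts.1 - b ts.2‖) with hSdef
  have hDS : ∀ n : Fin N, M n - m n ≤ S := by
    intro n
    obtain ⟨u, hu, hEu⟩ := Finset.exists_mem_eq_sup' hTne (fun t => b t n)
    obtain ⟨v, hv, hEv⟩ := Finset.exists_mem_eq_inf' hTne (fun t => b t n)
    have h1 : M n - m n = b u n - b v n := by simp only [hMdef, hmdef]; rw [hEu, hEv]
    have h2 : b u n - b v n ≤ ‖b u - b v‖ := by
      calc b u n - b v n ≤ |b u n - b v n| := le_abs_self _
        _ = ‖(b u - b v) n‖ := by rw [Pi.sub_apply, Real.norm_eq_abs]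
        _ ≤ ‖b u - b v‖ := norm_le_pi_norm _ n
    have h3 : ‖b u - b v‖ ≤ S := by
      rw [hSdef]
      exact Finset.le_sup' (fun ts : ℕ × ℕ => ‖b ts.1 - b ts.2‖)
        (Finset.mem_product.mpr ⟨hu, hv⟩ : (u, v) ∈ Finset.Icc 1 T ×ˢ Finset.Icc 1 T)
    linarith
  have hS0 : 0 ≤ S := by
    have h3 : ‖b 1 - b 1‖ ≤ S := by
      rw [hSdef]
      exact Finset.le_sup' (fun ts : ℕ × ℕ => ‖b ts.1 - b ts.2‖)
        (Finset.mem_product.mpr ⟨Finset.mem_Icc.mpr ⟨le_refl 1, hT⟩,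
          Finset.mem_Icc.mpr ⟨le_refl 1, hT⟩⟩ : ((1:ℕ), (1:ℕ)) ∈ Finset.Icc 1 T ×ˢ Finset.Icc 1 T)
    simpa using h3
  have hc0 : (0:ℝ) ≤ 1 - Amin ^ (T-1) := by
    have := pow_le_one₀ (n := T-1) hA0.le hA1
    linarith
  have hgoal : ‖h t - h s‖ ≤ (1 - Amin ^ (T-1)) * S := by
    rw [pi_norm_le_iff_of_nonneg (mul_nonneg hc0 hS0)]
    intro n
    rw [Pi.sub_apply, Real.norm_eq_abs]
    calc |h t n - h s n| ≤ (1 - Amin ^ (T-1)) * (M n - m n) :=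
          hpair' n t s ht.1 ht.2 hs.1 hs.2
      _ ≤ (1 - Amin ^ (T-1)) * S := mul_le_mul_of_nonneg_left (hDS n) hc0
  exact hgoal
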